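/- arXiv:2510.03109 — 2 statements merged into one kernel-verified Lean document; each statement's English description precedes it below -/
import Mathlib

section
/- Suppose: L_n : Θ → ℝ is measurable, bounded below, lower semicontinuous, and coercive; 𝒬 ⊆ 𝒫(Θ) is convex and closed in the weak* topology; D is lower semicontinuous and strictly convex in its first argument; D(Q,Π) ≤ M for all Q ∈ 𝒬; there exists P_n^⋆ ∈ 𝒬 with J_{L_n}(P_n^⋆) ≤ J_{L_n}(Q) for all Q ∈ 𝒬; and some Q ∈ 𝒬 has T_n(Q) < ∞. Then the functional T_n has a unique minimiser over 𝒬. -/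
open MeasureTheory Filter Topology
open scoped ENNReal NNReal

/-- The loss functional `J_f(ν) := ∫ f dν`, valued in the extended reals; for `f`
bounded below it takes values in `(-∞, ∞]`. -/
noncomputable def J {Θ : Type*} [MeasurableSpace Θ] (f : Θ → ℝ) (ν : Measure Θ) : EReal :=
  ((∫⁻ θ, ENNReal.ofReal (f θ) ∂ν : ℝ≥0∞) : EReal) -
    ((∫⁻ θ, ENNReal.ofReal (-f θ) ∂ν : ℝ≥0∞) : EReal)

/-- The GVI objective `T n β L D Π Q := n · J_L(Q) + (1/β) · D(Q, Π)`. -/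
noncomputable def T {Θ : Type*} [MeasurableSpace Θ] (n : ℕ) (β : ℝ) (L : Θ → ℝ)
    (D : ProbabilityMeasure Θ → ProbabilityMeasure Θ → ℝ)
    (prior Q : ProbabilityMeasure Θ) : EReal :=
  ((n : ℝ) : EReal) * J L (Q : Measure Θ) + ((1 / β * D Q prior : ℝ) : EReal)

/-- `f : Θ → ℝ` is coercive if for every `c` there is a compact set outside of which `f > c`. -/
def Coercive {Θ : Type*} [TopologicalSpace Θ] (f : Θ → ℝ) : Prop :=
  ∀ c : ℝ, ∃ K : Set Θ, IsCompact K ∧ ∀ θ ∉ K, c < f θ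

/-- The mixture `a·μ + (1−a)·ν` of two probability measures. -/
noncomputable def mix {Θ : Type*} [MeasurableSpace Θ] (μ ν : ProbabilityMeasure Θ) (a : ℝ)
    (ha0 : 0 ≤ a) (ha1 : a ≤ 1) : ProbabilityMeasure Θ :=
  ⟨ENNReal.ofReal a • (μ : Measure Θ) + ENNReal.ofReal (1 - a) • (ν : Measure Θ), by
    constructor
    simp only [Measure.coe_add, Pi.add_apply, Measure.smul_apply, smul_eq_mul, measure_univ,
      mul_one]
    rw [← ENNReal.ofReal_add ha0 (by linarith)]
    norm_num⟩

/-- The Dirac probability measure at `θ`. -/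
noncomputable def diracProb {Θ : Type*} [MeasurableSpace Θ] (θ : Θ) : ProbabilityMeasure Θ :=
  ⟨Measure.dirac θ, inferInstance⟩

/-- `𝒬` allows for Dirac measures: it is weak*-closed and the infimum of `J_f` over `𝒬`
equals the infimum of `f` over `Θ`, for every bounded below, lsc, coercive `f`. -/
def AllowsDiracs {Θ : Type*} [MeasurableSpace Θ] [TopologicalSpace Θ] [OpensMeasurableSpace Θ]
    (𝒬 : Set (ProbabilityMeasure Θ)) : Prop :=
  IsClosed 𝒬 ∧ ∀ f : Θ → ℝ, (∃ b, ∀ θ, b ≤ f θ) → LowerSemicontinuous f → Coercive f →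
    (⨅ ν : 𝒬, J f (ν.1 : Measure Θ)) = ((⨅ θ, f θ : ℝ) : EReal)

/-!
Subtracting a lower bound `b` of `L` turns `T_n`, up to the constant `n b`, into the
`[0, ∞]`-valued functional `F Q = n ∫⁻ (L - b) dQ + D(Q, Π) / β` (`shiftedObjective`). By the
portmanteau theorem and the layer-cake formula, `F` is lower semicontinuous for the (metrizable)
weak topology; by Markov's inequality and coercivity of `L`, its sublevel sets are tight, hence
compact by Prokhorov's theorem. So `F` attains its minimum on the closed set `𝒬`. As
`∫⁻ (L - b) dQ` is affine under mixtures and `D` is strictly convex, the midpoint of two distinct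
minimisers would do strictly better.
-/

open TopologicalSpace (PseudoMetrizableSpace SeparableSpace)

lemma ENNReal.ofReal_add_ofReal_neg_of_le {x y : ℝ} (h : y ≤ x) :
    ENNReal.ofReal x + ENNReal.ofReal (-y) =
      ENNReal.ofReal (x - y) + ENNReal.ofReal (-x) + ENNReal.ofReal y := by
  rw [← ENNReal.toReal_eq_toReal_iff' (by simp) (by simp)]
  simp only [ENNReal.toReal_add, ENNReal.ofReal_ne_top, ne_eq, not_false_eq_true,
    ENNReal.add_ne_top, and_self, ENNReal.toReal_ofReal']
  grind

lemma EReal.sub_eq_add_of_add_eq {x y : EReal} {a p q : ℝ} (hx : x ≠ ⊥)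
    (h : x + p = y + a + q) : x - a = y + (q - p : ℝ) := by
  induction x using EReal.rec <;> induction y using EReal.rec <;>
    simp only [← EReal.coe_add, ← EReal.coe_sub, EReal.top_add_coe, EReal.bot_add,
      EReal.top_sub_coe, EReal.coe_ne_top, EReal.top_ne_coe, EReal.coe_eq_coe_iff] at h ⊢ <;>
    first | trivial | linarith

section Integrals

variable {Θ : Type*} [MeasurableSpace Θ]

lemma J_eq_lintegral_sub_add {f : Θ → ℝ} (hf : Measurable f) {b : ℝ} (hb : ∀ θ, b ≤ f θ)
    (ν : Measure Θ) [IsProbabilityMeasure ν] :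
    J f ν = ((∫⁻ θ, ENNReal.ofReal (f θ - b) ∂ν : ℝ≥0∞) : EReal) + b := by
  have hneg : ∫⁻ θ, ENNReal.ofReal (-f θ) ∂ν ≠ ⊤ := by
    refine ne_top_of_le_ne_top (ENNReal.ofReal_ne_top (r := -b)) ?_
    calc ∫⁻ θ, ENNReal.ofReal (-f θ) ∂ν ≤ ∫⁻ _, ENNReal.ofReal (-b) ∂ν :=
          lintegral_mono fun θ => ENNReal.ofReal_le_ofReal (neg_le_neg (hb θ))
      _ = ENNReal.ofReal (-b) := by simp
  have key := lintegral_congr (μ := ν) fun θ => ENNReal.ofReal_add_ofReal_neg_of_le (hb θ)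
  rw [lintegral_add_right _ measurable_const, lintegral_add_right _ measurable_const,
    lintegral_add_left (hf.sub_const b).ennreal_ofReal] at key
  simp only [lintegral_const, measure_univ, mul_one] at key
  have key' := congrArg ((↑) : ℝ≥0∞ → EReal) key
  simp only [EReal.coe_ennreal_add, EReal.coe_ennreal_ofReal] at key'
  rw [← EReal.coe_ennreal_toReal hneg] at key'
  unfold J
  rw [← EReal.coe_ennreal_toReal hneg, EReal.sub_eq_add_of_add_eq (by simp) key',
    max_zero_sub_max_neg_zero_eq_self]

lemma lintegral_mix (g : Θ → ℝ≥0∞) (μ ν : ProbabilityMeasure Θ) {a : ℝ} (ha0 : 0 ≤ a)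
    (ha1 : a ≤ 1) :
    ∫⁻ θ, g θ ∂(mix μ ν a ha0 ha1 : Measure Θ) =
      ENNReal.ofReal a * ∫⁻ θ, g θ ∂μ + ENNReal.ofReal (1 - a) * ∫⁻ θ, g θ ∂ν := by
  simp [mix, lintegral_add_measure, lintegral_smul_measure]

end Integrals

lemma Coercive.sub_const {Θ : Type*} [TopologicalSpace Θ] {f : Θ → ℝ} (hf : Coercive f) (b : ℝ) :
    Coercive fun θ => f θ - b := fun c => by
  obtain ⟨K, hK, hfK⟩ := hf (c + b)
  exact ⟨K, hK, fun θ hθ => lt_sub_iff_add_lt.mpr (hfK θ hθ)⟩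

section Topological

variable {Θ : Type*} [TopologicalSpace Θ] [MeasurableSpace Θ]

lemma isTightMeasureSet_setOf_lintegral_le {g : Θ → ℝ} (hg : Measurable g) (hcoer : Coercive g)
    {C : ℝ≥0∞} (hC : C ≠ ⊤) :
    IsTightMeasureSet {μ : Measure Θ | ∫⁻ θ, ENNReal.ofReal (g θ) ∂μ ≤ C} := by
  rw [isTightMeasureSet_iff_exists_isCompact_measure_compl_le]
  intro ε hε
  have hlim : Tendsto (fun c : ℝ => C / ENNReal.ofReal c) atTop (𝓝 0) := by
    simpa using ENNReal.Tendsto.const_div ENNReal.tendsto_ofReal_atTop (Or.inr hC)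
  obtain ⟨c, hcε, hc⟩ := ((hlim.eventually (ge_mem_nhds hε)).and (eventually_gt_atTop 0)).exists
  obtain ⟨K, hK, hgK⟩ := hcoer c
  refine ⟨K, hK, fun μ (hμ : _ ≤ C) => ?_⟩
  calc μ Kᶜ ≤ μ {θ | ENNReal.ofReal c ≤ ENNReal.ofReal (g θ)} :=
        measure_mono fun θ hθ => ENNReal.ofReal_le_ofReal (hgK θ hθ).le
    _ ≤ (∫⁻ θ, ENNReal.ofReal (g θ) ∂μ) / ENNReal.ofReal c :=
        meas_ge_le_lintegral_div hg.ennreal_ofReal.aemeasurable (by simpa using hc)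
          ENNReal.ofReal_ne_top
    _ ≤ C / ENNReal.ofReal c := by gcongr
    _ ≤ ε := hcε

variable [OpensMeasurableSpace Θ]

lemma lintegral_le_liminf_lintegral_of_tendsto [HasOuterApproxClosed Θ] {g : Θ → ℝ}
    (hg : LowerSemicontinuous g) (hg0 : 0 ≤ g) {μ : ProbabilityMeasure Θ}
    {μs : ℕ → ProbabilityMeasure Θ} (hμs : Tendsto μs atTop (𝓝 μ)) :
    ∫⁻ θ, ENNReal.ofReal (g θ) ∂μ ≤ atTop.liminf fun i => ∫⁻ θ, ENNReal.ofReal (g θ) ∂(μs i) := by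
  simp_rw [lintegral_eq_lintegral_meas_lt _ (Eventually.of_forall hg0)
    hg.measurable.aemeasurable]
  calc ∫⁻ t in Set.Ioi 0, (μ : Measure Θ) {θ | t < g θ}
      ≤ ∫⁻ t in Set.Ioi 0, atTop.liminf fun i => (μs i : Measure Θ) {θ | t < g θ} :=
        lintegral_mono fun t =>
          ProbabilityMeasure.le_liminf_measure_open_of_tendsto hμs (hg.isOpen_preimage t)
    _ ≤ atTop.liminf fun i => ∫⁻ t in Set.Ioi 0, (μs i : Measure Θ) {θ | t < g θ} :=
        lintegral_liminf_le fun i => Antitone.measurable fun s t hst =>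
          measure_mono fun θ hθ => lt_of_le_of_lt hst hθ

lemma lowerSemicontinuous_lintegral [PseudoMetrizableSpace Θ] [SeparableSpace Θ] {g : Θ → ℝ}
    (hg : LowerSemicontinuous g) (hg0 : 0 ≤ g) :
    LowerSemicontinuous fun μ : ProbabilityMeasure Θ => ∫⁻ θ, ENNReal.ofReal (g θ) ∂μ := by
  refine lowerSemicontinuous_iff_isClosed_preimage.mpr fun y => ?_
  refine isSeqClosed_iff_isClosed.mp fun μs μ hμs hlim => ?_
  exact (lintegral_le_liminf_lintegral_of_tendsto hg hg0 hlim).trans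
    (liminf_le_of_frequently_le' (Frequently.of_forall hμs))

end Topological

lemma exists_isMinOn_of_isCompact_sublevel {X α : Type*} [TopologicalSpace X] [LinearOrder α]
    {f : X → α} {s : Set X} {x₀ : X} (hx₀ : x₀ ∈ s) (hf : LowerSemicontinuousOn f s)
    (hK : IsCompact (s ∩ f ⁻¹' Set.Iic (f x₀))) : ∃ x ∈ s, IsMinOn f s x := by
  obtain ⟨x, ⟨hxs, hx⟩, hmin⟩ := LowerSemicontinuousOn.exists_isMinOn
    (s := s ∩ f ⁻¹' Set.Iic (f x₀)) ⟨x₀, hx₀, le_rfl⟩ hK (hf.mono Set.inter_subset_left)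
  refine ⟨x, hxs, fun y hy => ?_⟩
  by_cases hy₀ : f y ≤ f x₀
  · exact hmin ⟨hy, hy₀⟩
  · exact le_trans hx (le_of_not_ge hy₀)

section Objective

variable {Θ : Type*} [MeasurableSpace Θ]

noncomputable def shiftedObjective (n : ℕ) (β b : ℝ) (L : Θ → ℝ)
    (D : ProbabilityMeasure Θ → ProbabilityMeasure Θ → ℝ) (Pr Q : ProbabilityMeasure Θ) : ℝ≥0∞ :=
  n * ∫⁻ θ, ENNReal.ofReal (L θ - b) ∂(Q : Measure Θ) + ENNReal.ofReal (1 / β * D Q Pr)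

variable {n : ℕ} {β b : ℝ} {L : Θ → ℝ} {D : ProbabilityMeasure Θ → ProbabilityMeasure Θ → ℝ}
  {Pr : ProbabilityMeasure Θ}

lemma T_eq_shiftedObjective_add (hL : Measurable L) (hb : ∀ θ, b ≤ L θ)
    {Q : ProbabilityMeasure Θ} (hD : 0 ≤ 1 / β * D Q Pr) :
    T n β L D Pr Q = shiftedObjective n β b L D Pr Q + ((n * b : ℝ) : EReal) := by
  rw [T, J_eq_lintegral_sub_add hL hb, shiftedObjective, EReal.coe_ennreal_add,
    EReal.coe_ennreal_mul, EReal.coe_ennreal_ofReal, max_eq_left hD,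
    EReal.left_distrib_of_nonneg_of_ne_top (by positivity) (EReal.coe_ne_top _)]
  simp only [EReal.coe_mul]
  exact add_right_comm _ _ _

lemma shiftedObjective_mix_lt (hβ : 0 < β) (hD : ∀ Q, 0 ≤ D Q Pr) {μ ν : ProbabilityMeasure Θ}
    {a : ℝ} (h0 : 0 < a) (h1 : a < 1)
    (hDμν : D (mix μ ν a h0.le h1.le) Pr < a * D μ Pr + (1 - a) * D ν Pr)
    (hμ : shiftedObjective n β b L D Pr μ ≠ ⊤) (hν : shiftedObjective n β b L D Pr ν ≠ ⊤) :
    shiftedObjective n β b L D Pr (mix μ ν a h0.le h1.le) <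
      ENNReal.ofReal a * shiftedObjective n β b L D Pr μ +
        ENNReal.ofReal (1 - a) * shiftedObjective n β b L D Pr ν := by
  set I := fun Q : ProbabilityMeasure Θ =>
    (n : ℝ≥0∞) * ∫⁻ θ, ENNReal.ofReal (L θ - b) ∂(Q : Measure Θ)
  set d := fun Q => ENNReal.ofReal (1 / β * D Q Pr)
  have hβ' : 0 < 1 / β := one_div_pos.mpr hβ
  have := hD μ
  have := hD ν
  have := hD (mix μ ν a h0.le h1.le)
  have := sub_pos.2 h1
  have hd :
      d (mix μ ν a h0.le h1.le) < ENNReal.ofReal a * d μ + ENNReal.ofReal (1 - a) * d ν := by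
    simp only [d]
    rw [← ENNReal.ofReal_mul h0.le, ← ENNReal.ofReal_mul (sub_nonneg.2 h1.le),
      ← ENNReal.ofReal_add (by positivity) (by positivity),
      ENNReal.ofReal_lt_ofReal_iff_of_nonneg (by positivity)]
    calc 1 / β * D (mix μ ν a h0.le h1.le) Pr < 1 / β * (a * D μ Pr + (1 - a) * D ν Pr) :=
          mul_lt_mul_of_pos_left hDμν hβ'
      _ = a * (1 / β * D μ Pr) + (1 - a) * (1 / β * D ν Pr) := by ring
  have hIfin : ENNReal.ofReal a * I μ + ENNReal.ofReal (1 - a) * I ν ≠ ⊤ :=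
    ENNReal.add_ne_top.mpr
      ⟨ENNReal.mul_ne_top ENNReal.ofReal_ne_top (ne_top_of_le_ne_top hμ le_self_add),
        ENNReal.mul_ne_top ENNReal.ofReal_ne_top (ne_top_of_le_ne_top hν le_self_add)⟩
  calc shiftedObjective n β b L D Pr (mix μ ν a h0.le h1.le)
      = ENNReal.ofReal a * I μ + ENNReal.ofReal (1 - a) * I ν + d (mix μ ν a h0.le h1.le) := by
        simp only [shiftedObjective, lintegral_mix, I, d]
        ring
    _ < ENNReal.ofReal a * I μ + ENNReal.ofReal (1 - a) * I ν +
          (ENNReal.ofReal a * d μ + ENNReal.ofReal (1 - a) * d ν) :=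
        ENNReal.add_lt_add_left hIfin hd
    _ = _ := by
        simp only [shiftedObjective, I, d]
        ring

lemma eq_of_isMinOn_shiftedObjective {𝒬 : Set (ProbabilityMeasure Θ)}
    (h𝒬conv : ∀ μ ∈ 𝒬, ∀ ν ∈ 𝒬, ∀ (a : ℝ) (ha0 : 0 ≤ a) (ha1 : a ≤ 1), mix μ ν a ha0 ha1 ∈ 𝒬)
    (hβ : 0 < β) (hD : ∀ Q, 0 ≤ D Q Pr)
    (hDconv : ∀ μ ν : ProbabilityMeasure Θ, μ ≠ ν → ∀ (a : ℝ) (h0 : 0 < a) (h1 : a < 1),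
      D (mix μ ν a h0.le h1.le) Pr < a * D μ Pr + (1 - a) * D ν Pr)
    {Q₁ Q₂ : ProbabilityMeasure Θ} (h₁ : Q₁ ∈ 𝒬) (h₂ : Q₂ ∈ 𝒬)
    (hmin₁ : IsMinOn (shiftedObjective n β b L D Pr) 𝒬 Q₁)
    (hmin₂ : IsMinOn (shiftedObjective n β b L D Pr) 𝒬 Q₂)
    (hfin : shiftedObjective n β b L D Pr Q₁ ≠ ⊤) : Q₁ = Q₂ := by
  by_contra hne
  have heq : shiftedObjective n β b L D Pr Q₂ = shiftedObjective n β b L D Pr Q₁ :=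
    le_antisymm (hmin₂ h₁) (hmin₁ h₂)
  have hlt := shiftedObjective_mix_lt hβ hD (by norm_num) (by norm_num)
    (hDconv Q₁ Q₂ hne (1 / 2) (by norm_num) (by norm_num)) hfin (heq ▸ hfin)
  rw [heq, ← add_mul, ← ENNReal.ofReal_add (by norm_num) (by norm_num)] at hlt
  norm_num at hlt
  exact (hmin₁ (h𝒬conv Q₁ h₁ Q₂ h₂ _ _ _)).not_gt hlt

variable [TopologicalSpace Θ]

lemma lowerSemicontinuous_shiftedObjective [OpensMeasurableSpace Θ]
    [PseudoMetrizableSpace Θ] [SeparableSpace Θ]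
    (hL : LowerSemicontinuous L) (hb : ∀ θ, b ≤ L θ) (hβ : 0 ≤ β)
    (hD : LowerSemicontinuous fun Q => D Q Pr) :
    LowerSemicontinuous (shiftedObjective n β b L D Pr) := by
  have hLb : LowerSemicontinuous fun θ => L θ - b :=
    (continuous_sub_right b).comp_lowerSemicontinuous hL fun _ _ h => sub_le_sub_right h b
  have hI := lowerSemicontinuous_lintegral hLb fun θ => sub_nonneg.mpr (hb θ)
  refine LowerSemicontinuous.add
    ((ENNReal.continuous_const_mul (ENNReal.natCast_ne_top n)).comp_lowerSemicontinuous hI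
      fun _ _ h => mul_le_mul_right h _) ?_
  exact ENNReal.continuous_ofReal.comp_lowerSemicontinuous
    ((continuous_const_mul _).comp_lowerSemicontinuous hD fun _ _ h =>
      mul_le_mul_of_nonneg_left h (by positivity)) ENNReal.ofReal_mono

lemma isCompact_setOf_shiftedObjective_le [PolishSpace Θ] [BorelSpace Θ] (hLm : Measurable L)
    (hL : LowerSemicontinuous L) (hb : ∀ θ, b ≤ L θ) (hcoer : Coercive L) (hβ : 0 ≤ β)
    (hD : LowerSemicontinuous fun Q => D Q Pr) (hn : n ≠ 0) {C : ℝ≥0∞} (hC : C ≠ ⊤) :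
    IsCompact {Q | shiftedObjective n β b L D Pr Q ≤ C} := by
  have hn' : (n : ℝ≥0∞) ≠ 0 := Nat.cast_ne_zero.mpr hn
  set S := {Q : ProbabilityMeasure Θ | ∫⁻ θ, ENNReal.ofReal (L θ - b) ∂(Q : Measure Θ) ≤ C / n}
  have hS : IsCompact (closure S) := by
    refine isCompact_closure_of_isTightMeasureSet ((isTightMeasureSet_setOf_lintegral_le
      (hLm.sub_const b) (hcoer.sub_const b) (ENNReal.div_ne_top hC hn')).subset ?_)
    rintro _ ⟨Q, hQ, rfl⟩
    exact hQ
  refine hS.of_isClosed_subset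
    ((lowerSemicontinuous_shiftedObjective hL hb hβ hD).isClosed_preimage C)
    fun Q (hQ : _ ≤ C) => subset_closure ?_
  rw [Set.mem_ofPred_eq, ENNReal.le_div_iff_mul_le (.inl hn') (.inl (by simp)), mul_comm]
  exact le_trans le_self_add hQ

end Objective

theorem gvi_posterior_existsUnique_general {Θ : Type*} [TopologicalSpace Θ] [PolishSpace Θ]
    [MeasurableSpace Θ] [BorelSpace Θ]
    (L : Θ → ℝ) (hLmeas : Measurable L) (hLbdd : ∃ b : ℝ, ∀ θ, b ≤ L θ)
    (hLlsc : LowerSemicontinuous L) (hLcoer : Coercive L)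
    (𝒬 : Set (ProbabilityMeasure Θ)) (h𝒬 : IsClosed 𝒬)
    (h𝒬conv : ∀ μ ∈ 𝒬, ∀ ν ∈ 𝒬, ∀ (a : ℝ) (ha0 : 0 ≤ a) (ha1 : a ≤ 1), mix μ ν a ha0 ha1 ∈ 𝒬)
    (D : ProbabilityMeasure Θ → ProbabilityMeasure Θ → ℝ)
    (hDnn : ∀ P Q : ProbabilityMeasure Θ, 0 ≤ D P Q)
    (hDlsc : ∀ P : ProbabilityMeasure Θ, LowerSemicontinuous fun Q => D Q P)
    (Pr : ProbabilityMeasure Θ)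
    (hDconv : ∀ μ ν : ProbabilityMeasure Θ, μ ≠ ν → ∀ (a : ℝ) (h0 : 0 < a) (h1 : a < 1),
      D (mix μ ν a h0.le h1.le) Pr < a * D μ Pr + (1 - a) * D ν Pr)
    (β : ℝ) (hβ : 0 < β) (n : ℕ) (hn : 1 ≤ n)
    (hfin : ∃ Q ∈ 𝒬, T n β L D Pr Q < (⊤ : EReal)) :
    ∃! Qn : ProbabilityMeasure Θ, Qn ∈ 𝒬 ∧ ∀ Q ∈ 𝒬, T n β L D Pr Qn ≤ T n β L D Pr Q := by
  obtain ⟨b, hb⟩ := hLbdd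
  obtain ⟨Q₀, hQ₀, hQ₀fin⟩ := hfin
  set F := shiftedObjective n β b L D Pr
  have hT : ∀ Q, T n β L D Pr Q = F Q + ((n * b : ℝ) : EReal) := fun Q =>
    T_eq_shiftedObjective_add hLmeas hb (mul_nonneg (by positivity) (hDnn Q Pr))
  have hTle : ∀ Q Q', T n β L D Pr Q ≤ T n β L D Pr Q' ↔ F Q ≤ F Q' := fun Q Q' => by
    rw [hT, hT, (EReal.addLECancellable_coe _).add_le_add_iff_right,
      EReal.coe_ennreal_le_coe_ennreal_iff]
  simp_rw [hTle]
  have hF₀ : F Q₀ ≠ ⊤ := by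
    rintro h
    rw [hT, h, EReal.coe_ennreal_top, EReal.top_add_coe] at hQ₀fin
    exact lt_irrefl _ hQ₀fin
  have hK : IsCompact (𝒬 ∩ F ⁻¹' Set.Iic (F Q₀)) :=
    (isCompact_setOf_shiftedObjective_le hLmeas hLlsc hb hLcoer hβ.le (hDlsc Pr)
      (by omega) hF₀).inter_left h𝒬
  obtain ⟨Qn, hQn, hmin⟩ := exists_isMinOn_of_isCompact_sublevel hQ₀
    ((lowerSemicontinuous_shiftedObjective hLlsc hb hβ.le (hDlsc Pr)).lowerSemicontinuousOn _) hK
  refine ⟨Qn, ⟨hQn, hmin⟩, fun Q ⟨hQ, hQmin⟩ => ?_⟩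
  exact (eq_of_isMinOn_shiftedObjective h𝒬conv hβ (hDnn · Pr) hDconv hQ hQn hQmin hmin
    (ne_top_of_le_ne_top hF₀ (hQmin Q₀ hQ₀)))

/-- Existence and uniqueness of the GVI posterior when additionally `𝒬` is convex
and the divergence is strictly convex in its first argument. -/
theorem gvi_posterior_existsUnique {Θ : Type*} [TopologicalSpace Θ] [PolishSpace Θ]
    [MeasurableSpace Θ] [BorelSpace Θ]
    (L : Θ → ℝ) (hLmeas : Measurable L) (hLbdd : ∃ b : ℝ, ∀ θ, b ≤ L θ)
    (hLlsc : LowerSemicontinuous L) (hLcoer : Coercive L)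
    (𝒬 : Set (ProbabilityMeasure Θ)) (h𝒬 : IsClosed 𝒬)
    (h𝒬conv : ∀ μ ∈ 𝒬, ∀ ν ∈ 𝒬, ∀ (a : ℝ) (ha0 : 0 ≤ a) (ha1 : a ≤ 1), mix μ ν a ha0 ha1 ∈ 𝒬)
    (D : ProbabilityMeasure Θ → ProbabilityMeasure Θ → ℝ)
    (hDnn : ∀ P Q : ProbabilityMeasure Θ, 0 ≤ D P Q)
    (hDlsc : ∀ P : ProbabilityMeasure Θ, LowerSemicontinuous fun Q => D Q P)
    (Pr : ProbabilityMeasure Θ)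
    (hDconv : ∀ μ ν : ProbabilityMeasure Θ, μ ≠ ν → ∀ (a : ℝ) (h0 : 0 < a) (h1 : a < 1),
      D (mix μ ν a h0.le h1.le) Pr < a * D μ Pr + (1 - a) * D ν Pr)
    (M β : ℝ) (hM : 0 < M) (hβ : 0 < β) (n : ℕ) (hn : 1 ≤ n)
    (hDbdd : ∀ Q ∈ 𝒬, D Q Pr ≤ M)
    (Pstar : ProbabilityMeasure Θ) (hPstar𝒬 : Pstar ∈ 𝒬)
    (hPstar : ∀ Q ∈ 𝒬, J L (Pstar : Measure Θ) ≤ J L (Q : Measure Θ))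
    (hfin : ∃ Q ∈ 𝒬, T n β L D Pr Q < (⊤ : EReal)) :
    ∃! Qn : ProbabilityMeasure Θ, Qn ∈ 𝒬 ∧ ∀ Q ∈ 𝒬, T n β L D Pr Qn ≤ T n β L D Pr Q :=
  gvi_posterior_existsUnique_general L hLmeas hLbdd hLlsc hLcoer 𝒬 h𝒬 h𝒬conv D hDnn hDlsc Pr hDconv
    β hβ n hn hfin
end

section
/- Take 𝒬 = 𝒫(Θ). Let (L_n) be measurable, bounded below, lower semicontinuous, coercive functions Θ → ℝ with L_n → L pointwise, L lower semicontinuous, and inf_Θ L ≥ limsup_n inf_Θ L_n > −∞. Suppose D(Q,Π) ≤ M for all Q ∈ 𝒫(Θ), and for each n let Q_n be a minimiser of T_n(Q) = n·J_{L_n}(Q) + (1/β)·D(Q,Π) over 𝒫(Θ). Define N_ε := {θ ∈ Θ : L(θ) ≤ inf_Θ L + ε}. If for every ε > 0 one has liminf_n inf_{N_ε^c} L_n > inf_Θ L, then Q_n(N_ε) → 1 as n → ∞ for every ε > 0. -/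
open MeasureTheory Filter Topology
open scoped ENNReal NNReal

/-!
Testing the minimality of `Q n` against Dirac masses, and using `D ≤ M`, gives
`∫ L n ∂Q n ≤ inf L n + M / (β n)`. For large `n`, the separation hypothesis and
`limsup inf L n ≤ inf Llim` provide a fixed margin `δ > 0` by which `L n` exceeds `inf L n`
outside `N_ε`, so a Markov-type bound gives `Q n (N_εᶜ) ≤ M / (β n δ) → 0`.
-/

namespace ENNReal

lemma ofReal_norm_eq_ofReal_add_ofReal_neg (a : ℝ) :
    ENNReal.ofReal ‖a‖ = ENNReal.ofReal a + ENNReal.ofReal (-a) := by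
  rcases le_total 0 a with h | h
  · rw [Real.norm_of_nonneg h, ENNReal.ofReal_of_nonpos (neg_nonpos.mpr h), add_zero]
  · rw [Real.norm_of_nonpos h, ENNReal.ofReal_of_nonpos h, zero_add]

end ENNReal

namespace EReal

lemma coe_ennreal_ofReal_sub_coe_ennreal_ofReal_neg (a : ℝ) :
    (ENNReal.ofReal a : EReal) - (ENNReal.ofReal (-a) : EReal) = a := by
  rw [coe_ennreal_ofReal, coe_ennreal_ofReal, ← coe_sub]
  rcases le_total 0 a with h | h <;> simp [h]

end EReal

section Loss

variable {Θ : Type*} [MeasurableSpace Θ] {f : Θ → ℝ} {ν : Measure Θ}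

lemma J_dirac (hf : Measurable f) (θ : Θ) : J f (Measure.dirac θ) = f θ := by
  rw [J, lintegral_dirac' θ hf.ennreal_ofReal,
    lintegral_dirac' θ (f := fun x => ENNReal.ofReal (-f x)) hf.neg.ennreal_ofReal]
  exact EReal.coe_ennreal_ofReal_sub_coe_ennreal_ofReal_neg (f θ)

lemma J_eq_integral (hf : Integrable f ν) : J f ν = ∫ θ, f θ ∂ν := by
  rw [integral_eq_lintegral_pos_part_sub_lintegral_neg_part hf, J, EReal.coe_sub,
    EReal.coe_ennreal_toReal ((lintegral_ofReal_le_lintegral_enorm _).trans_lt hf.2).ne,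
    EReal.coe_ennreal_toReal
      ((lintegral_ofReal_le_lintegral_enorm (fun θ => -f θ)).trans_lt hf.neg.2).ne]

lemma integrable_of_J_ne_top [IsFiniteMeasure ν] (hf : Measurable f) {b : ℝ} (hb : ∀ θ, b ≤ f θ)
    (hJ : J f ν ≠ ⊤) : Integrable f ν := by
  have hneg : ∫⁻ θ, ENNReal.ofReal (-f θ) ∂ν ≠ ⊤ := by
    refine ne_top_of_le_ne_top (ENNReal.mul_ne_top ENNReal.ofReal_ne_top (measure_ne_top ν .univ))
      ((lintegral_mono fun θ => ENNReal.ofReal_le_ofReal (neg_le_neg (hb θ))).trans_eq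
        (lintegral_const _))
  have hpos : ∫⁻ θ, ENNReal.ofReal (f θ) ∂ν ≠ ⊤ := by
    intro htop
    apply hJ
    rw [J, htop, EReal.coe_ennreal_top, ← EReal.coe_ennreal_toReal hneg]
    exact EReal.top_sub_coe _
  refine ⟨hf.aestronglyMeasurable, ?_⟩
  rw [hasFiniteIntegral_iff_norm,
    lintegral_congr fun θ => ENNReal.ofReal_norm_eq_ofReal_add_ofReal_neg (f θ),
    lintegral_add_left hf.ennreal_ofReal]
  exact ENNReal.add_lt_top.mpr ⟨hpos.lt_top, hneg.lt_top⟩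

lemma add_mul_measureReal_compl_le_integral [IsProbabilityMeasure ν] (hf : Integrable f ν)
    {S : Set Θ} (hS : MeasurableSet S) {c d : ℝ} (hc : ∀ θ, c ≤ f θ) (hd : ∀ θ ∉ S, d ≤ f θ) :
    c + (d - c) * ν.real Sᶜ ≤ ∫ θ, f θ ∂ν := by
  have hstep : ∀ θ, c + Sᶜ.indicator (fun _ => d - c) θ ≤ f θ := by
    intro θ
    by_cases hθ : θ ∈ S
    · simpa [hθ] using hc θ
    · simpa [hθ] using hd θ hθ
  calc c + (d - c) * ν.real Sᶜ = ∫ θ, c + Sᶜ.indicator (fun _ => d - c) θ ∂ν := by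
        rw [integral_add (integrable_const c) ((integrable_const _).indicator hS.compl),
          integral_indicator_const _ hS.compl]
        simp [mul_comm]
    _ ≤ ∫ θ, f θ ∂ν :=
        integral_mono ((integrable_const c).add ((integrable_const _).indicator hS.compl)) hf hstep

end Loss

section Minimizer

variable {Θ : Type*} [MeasurableSpace Θ] {n : ℕ} {β M : ℝ} {f : Θ → ℝ}
  {D : ProbabilityMeasure Θ → ProbabilityMeasure Θ → ℝ} {Pr Q : ProbabilityMeasure Θ}

lemma coe_mul_J_le_of_forall_T_le (hβ : 0 < β) (hf : Measurable f) (hDQ : 0 ≤ D Q Pr)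
    (hDM : ∀ θ, D (diracProb θ) Pr ≤ M) (hQ : ∀ Q', T n β f D Pr Q ≤ T n β f D Pr Q') (θ : Θ) :
    ((n : ℝ) : EReal) * J f Q ≤ ((n * f θ + M / β : ℝ) : EReal) :=
  calc ((n : ℝ) : EReal) * J f Q ≤ T n β f D Pr Q :=
        le_add_of_nonneg_right (EReal.coe_nonneg.mpr (by positivity))
    _ ≤ T n β f D Pr (diracProb θ) := hQ _
    _ = ((n * f θ + 1 / β * D (diracProb θ) Pr : ℝ) : EReal) := by
        rw [T, diracProb, ProbabilityMeasure.coe_mk, J_dirac hf]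
        push_cast
        rfl
    _ ≤ ((n * f θ + M / β : ℝ) : EReal) := by
        rw [one_div_mul_eq_div]
        gcongr
        exact hDM θ

lemma integral_le_iInf_add_of_forall_T_le (hn : 0 < n) (hβ : 0 < β) (hf : Measurable f) {b : ℝ}
    (hb : ∀ θ, b ≤ f θ) (hDQ : 0 ≤ D Q Pr) (hDM : ∀ θ, D (diracProb θ) Pr ≤ M)
    (hQ : ∀ Q', T n β f D Pr Q ≤ T n β f D Pr Q') :
    Integrable f Q ∧ ∫ θ, f θ ∂(Q : Measure Θ) ≤ (⨅ θ, f θ) + M / β / n := by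
  have hJ := coe_mul_J_le_of_forall_T_le hβ hf hDQ hDM hQ
  have := Q.nonempty
  have hn' : (0 : ℝ) < n := Nat.cast_pos.mpr hn
  have hint : Integrable f Q := by
    refine integrable_of_J_ne_top hf hb fun htop => ?_
    have hθ := hJ (Classical.arbitrary Θ)
    rw [htop, EReal.coe_mul_top_of_pos hn'] at hθ
    exact (EReal.coe_lt_top _).not_ge hθ
  refine ⟨hint, ?_⟩
  rw [← sub_le_iff_le_add]
  refine le_ciInf fun θ => ?_
  have hθ := hJ θ
  rw [J_eq_integral hint, ← EReal.coe_mul, EReal.coe_le_coe_iff] at hθ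
  rw [sub_le_iff_le_add, ← mul_le_mul_iff_right₀ hn']
  calc (n : ℝ) * ∫ θ, f θ ∂(Q : Measure Θ) ≤ n * f θ + M / β := hθ
    _ = n * (f θ + M / β / n) := by field_simp

lemma mul_measureReal_compl_le_of_forall_T_le (hn : 0 < n) (hβ : 0 < β) (hf : Measurable f)
    {b : ℝ} (hb : ∀ θ, b ≤ f θ) (hDQ : 0 ≤ D Q Pr) (hDM : ∀ θ, D (diracProb θ) Pr ≤ M)
    (hQ : ∀ Q', T n β f D Pr Q ≤ T n β f D Pr Q') {S : Set Θ} (hS : MeasurableSet S) {d : ℝ}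
    (hd : ∀ θ ∉ S, d ≤ f θ) :
    (d - ⨅ θ, f θ) * (Q : Measure Θ).real Sᶜ ≤ M / β / n := by
  obtain ⟨hint, hle⟩ := integral_le_iInf_add_of_forall_T_le hn hβ hf hb hDQ hDM hQ
  have hc : ∀ θ, (⨅ θ, f θ) ≤ f θ := ciInf_le ⟨b, Set.forall_mem_range.mpr hb⟩
  linarith [add_mul_measureReal_compl_le_integral hint hS hc hd]

end Minimizer

theorem gvi_concentration_full_space_general {Θ : Type*} [TopologicalSpace Θ]
    [MeasurableSpace Θ] [BorelSpace Θ]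
    (L : ℕ → Θ → ℝ) (Llim : Θ → ℝ)
    (hmeas : ∀ n, Measurable (L n)) (hbdd : ∀ n, ∃ b : ℝ, ∀ θ, b ≤ L n θ)
    (hLlimlsc : LowerSemicontinuous Llim)
    (hinf1 : Filter.limsup (fun n => ((⨅ θ : Θ, L n θ : ℝ) : EReal)) atTop ≤
      ((⨅ θ : Θ, Llim θ : ℝ) : EReal))
    (D : ProbabilityMeasure Θ → ProbabilityMeasure Θ → ℝ)
    (hDnn : ∀ P Q : ProbabilityMeasure Θ, 0 ≤ D P Q)
    (Pr : ProbabilityMeasure Θ) (M β : ℝ) (hβ : 0 < β)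
    (hDbdd : ∀ Q : ProbabilityMeasure Θ, D Q Pr ≤ M)
    (Qn : ℕ → ProbabilityMeasure Θ)
    (hQn : ∀ n, ∀ Q : ProbabilityMeasure Θ, T n β (L n) D Pr (Qn n) ≤ T n β (L n) D Pr Q)
    (hsep : ∀ ε : ℝ, 0 < ε → ((⨅ θ : Θ, Llim θ : ℝ) : EReal) <
      Filter.liminf (fun n =>
        ((⨅ θ : ({θ : Θ | Llim θ ≤ (⨅ θ' : Θ, Llim θ') + ε}ᶜ : Set Θ), L n (θ : Θ) : ℝ) : EReal))
        atTop) :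
    ∀ ε : ℝ, 0 < ε →
      Tendsto (fun n => ((Qn n) {θ : Θ | Llim θ ≤ (⨅ θ' : Θ, Llim θ') + ε} : ℝ)) atTop
        (nhds 1) := by
  intro ε hε
  set S := {θ : Θ | Llim θ ≤ (⨅ θ', Llim θ') + ε}
  have hS : MeasurableSet S := (hLlimlsc.isClosed_preimage _).measurableSet
  obtain ⟨x, hinf_lt_x, hx⟩ := EReal.exists_between_coe_real (hsep ε hε)
  obtain ⟨m, hinf_lt_m, hm_lt_x⟩ := exists_between (EReal.coe_lt_coe_iff.mp hinf_lt_x)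
  have hfar : ∀ᶠ n in atTop, x < ⨅ θ : (Sᶜ : Set Θ), L n θ :=
    (eventually_lt_of_lt_liminf hx).mono fun _ h => EReal.coe_lt_coe_iff.mp h
  have hnear : ∀ᶠ n in atTop, ⨅ θ, L n θ < m :=
    (eventually_lt_of_limsup_lt (hinf1.trans_lt (EReal.coe_lt_coe_iff.mpr hinf_lt_m))).mono
      fun _ h => EReal.coe_lt_coe_iff.mp h
  have hbound : ∀ᶠ n : ℕ in atTop, (Qn n : Measure Θ).real Sᶜ ≤ M / β / n / (x - m) := by
    filter_upwards [hfar, hnear, eventually_gt_atTop 0] with n hfar hnear hn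
    obtain ⟨b, hb⟩ := hbdd n
    have hd : ∀ θ ∉ S, (⨅ θ : (Sᶜ : Set Θ), L n θ) ≤ L n θ := fun θ hθ =>
      ciInf_le (f := fun θ : (Sᶜ : Set Θ) => L n θ)
        ⟨b, Set.forall_mem_range.mpr fun θ => hb θ⟩ ⟨θ, hθ⟩
    have hmass := mul_measureReal_compl_le_of_forall_T_le hn hβ (hmeas n) hb (hDnn _ _)
      (fun θ => hDbdd _) (hQn n) hS hd
    rw [le_div_iff₀ (sub_pos.mpr hm_lt_x), mul_comm]
    calc (x - m) * (Qn n : Measure Θ).real Sᶜ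
        ≤ ((⨅ θ : (Sᶜ : Set Θ), L n θ) - ⨅ θ, L n θ) * (Qn n : Measure Θ).real Sᶜ := by
          gcongr
      _ ≤ M / β / n := hmass
  have hcompl : Tendsto (fun n => (Qn n : Measure Θ).real Sᶜ) atTop (𝓝 0) := by
    refine squeeze_zero' (Eventually.of_forall fun _ => measureReal_nonneg) hbound ?_
    simpa using (tendsto_const_div_atTop_nhds_zero_nat (M / β)).div_const (x - m)
  simpa [probReal_compl_eq_one_sub hS] using hcompl.const_sub 1

/-- With `𝒬 = 𝒫(Θ)`, a divergence bounded by `M`, and GVI posteriors `Q n`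
minimising `T_n` over all probability measures, if for every `ε > 0` one has
`liminf_n inf_{N_ε^c} L_n > inf_Θ L∞`, then `Q n (N_ε) → 1` for every `ε > 0`. -/
theorem gvi_concentration_full_space {Θ : Type*} [TopologicalSpace Θ] [PolishSpace Θ]
    [MeasurableSpace Θ] [BorelSpace Θ] [Nonempty Θ]
    (L : ℕ → Θ → ℝ) (Llim : Θ → ℝ)
    (hmeas : ∀ n, Measurable (L n)) (hbdd : ∀ n, ∃ b : ℝ, ∀ θ, b ≤ L n θ)
    (hlsc : ∀ n, LowerSemicontinuous (L n)) (hcoer : ∀ n, Coercive (L n))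
    (hLlimlsc : LowerSemicontinuous Llim)
    (hconv : ∀ θ : Θ, Tendsto (fun n => L n θ) atTop (nhds (Llim θ)))
    (hinf1 : Filter.limsup (fun n => ((⨅ θ : Θ, L n θ : ℝ) : EReal)) atTop ≤
      ((⨅ θ : Θ, Llim θ : ℝ) : EReal))
    (hinf2 : (⊥ : EReal) < Filter.limsup (fun n => ((⨅ θ : Θ, L n θ : ℝ) : EReal)) atTop)
    (D : ProbabilityMeasure Θ → ProbabilityMeasure Θ → ℝ)
    (hDnn : ∀ P Q : ProbabilityMeasure Θ, 0 ≤ D P Q)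
    (Pr : ProbabilityMeasure Θ) (M β : ℝ) (hM : 0 < M) (hβ : 0 < β)
    (hDbdd : ∀ Q : ProbabilityMeasure Θ, D Q Pr ≤ M)
    (Qn : ℕ → ProbabilityMeasure Θ)
    (hQn : ∀ n, ∀ Q : ProbabilityMeasure Θ, T n β (L n) D Pr (Qn n) ≤ T n β (L n) D Pr Q)
    (hsep : ∀ ε : ℝ, 0 < ε → ((⨅ θ : Θ, Llim θ : ℝ) : EReal) <
      Filter.liminf (fun n =>
        ((⨅ θ : ({θ : Θ | Llim θ ≤ (⨅ θ' : Θ, Llim θ') + ε}ᶜ : Set Θ), L n (θ : Θ) : ℝ) : EReal))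
        atTop) :
    ∀ ε : ℝ, 0 < ε →
      Tendsto (fun n => ((Qn n) {θ : Θ | Llim θ ≤ (⨅ θ' : Θ, Llim θ') + ε} : ℝ)) atTop
        (nhds 1) :=
  gvi_concentration_full_space_general L Llim hmeas hbdd hLlimlsc hinf1 D hDnn Pr M β hβ hDbdd Qn
    hQn hsep
end
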